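/- Let σ : V(G') → {+1,−1} be a spin assignment with σ_{x_0} ≠ σ_{y_0}, and let τ agree with σ on V(G') \ {x_0,y_0} with τ_{x_0} = −σ_{x_0} and τ_{y_0} = −σ_{y_0}. Define cut_{G'}(σ) as the number of edges {a,b} of G' with σ_a ≠ σ_b. Then cut_{G'}(σ) − cut_{G'}(τ) ≤ 200n0² − 2. -/

import Mathlib

/-!
STATEMENT 16: flipping the spins of both x₀ and y₀ in a spin assignment σ on G′
with σ(x₀) ≠ σ(y₀) decreases the cut value by at most 200 n₀² - 2:
cut(σ) - cut(τ) ≤ 200 n₀² - 2. Spins are ℤˣ = {1,-1}; cutCount counts edges with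
differently-signed endpoints.
-/
noncomputable section

namespace QAOA

/-- Vertex type of the graph `G'` built from a graph on vertex type `V` of size `n0`:
gadget vertices `L u i` (`i < n0+1`), `R u i` (`i < 10 n0`), frame vertices
`X i`, `Y i` (`i < 100 n0²`), and the controller `W`. -/
inductive GPV (V : Type) (n0 : ℕ) : Type where
  | L : V → Fin (n0 + 1) → GPV V n0
  | R : V → Fin (10 * n0) → GPV V n0
  | X : Fin (100 * n0 * n0) → GPV V n0
  | Y : Fin (100 * n0 * n0) → GPV V n0
  | W : GPV V n0
  deriving DecidableEq, Fintype

/-- Base relation (one orientation per edge) describing the edges of `G'`. -/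
def gpRel {V : Type} [DecidableEq V] (n0 : ℕ) (G : SimpleGraph V) [DecidableRel G.Adj] :
    GPV V n0 → GPV V n0 → Bool
  | .L u _, .R v _ => u == v
  | .L u i, .L v j => decide (G.Adj u v) && ((i : ℕ) == (j : ℕ))
  | .X _, .Y _ => true
  | .X i, .L _ _ => (i : ℕ) == 0
  | .X i, .R _ _ => (i : ℕ) == 0
  | .Y i, .L _ _ => (i : ℕ) == 0
  | .Y i, .R _ _ => (i : ℕ) == 0
  | .W, .X i => (i : ℕ) == 0
  | .W, .Y i => (i : ℕ) == 0
  | .W, .L _ i => (i : ℕ) == 0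
  | _, _ => false

/-- The graph `G'` obtained from `G` by the four-step construction. -/
def Gp {V : Type} [DecidableEq V] (n0 : ℕ) (G : SimpleGraph V) [DecidableRel G.Adj] :
    SimpleGraph (GPV V n0) :=
  SimpleGraph.fromRel (fun a b => gpRel n0 G a b = true)

instance {V : Type} [DecidableEq V] (n0 : ℕ) (G : SimpleGraph V) [DecidableRel G.Adj] :
    DecidableRel (Gp n0 G).Adj := fun a b =>
  decidable_of_iff _ (SimpleGraph.fromRel_adj (fun a b => gpRel n0 G a b = true) a b).symm

/-- The special frame vertex `x₀`. -/
def xzero (V : Type) (n0 : ℕ) (h : 0 < n0) : GPV V n0 :=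
  GPV.X ⟨0, Nat.mul_pos (Nat.mul_pos (by norm_num) h) h⟩

/-- The special frame vertex `y₀`. -/
def yzero (V : Type) (n0 : ℕ) (h : 0 < n0) : GPV V n0 :=
  GPV.Y ⟨0, Nat.mul_pos (Nat.mul_pos (by norm_num) h) h⟩

/-- `cutSet H S` is the number of edges of `H` with exactly one endpoint in `S`. -/
def cutSet {W : Type} [Fintype W] [DecidableEq W] (H : SimpleGraph W) [DecidableRel H.Adj]
    (S : Finset W) : ℕ :=
  (Finset.univ.filter (fun pr : W × W => H.Adj pr.1 pr.2 ∧ pr.1 ∈ S ∧ pr.2 ∉ S)).card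

/-- `maxCut H` is the maximum of `cutSet H S` over all vertex subsets `S`. -/
def maxCut {W : Type} [Fintype W] [DecidableEq W] (H : SimpleGraph W) [DecidableRel H.Adj] : ℕ :=
  (Finset.univ : Finset (Finset W)).sup (fun S => cutSet H S)

end QAOA

namespace QAOA

/-- Number of edges of `H` whose endpoints receive different signs under `σ`. -/
def cutCount {W : Type} [Fintype W] [DecidableEq W] (H : SimpleGraph W)
    [DecidableRel H.Adj] (σ : W → ℤˣ) : ℕ :=
  (Finset.univ.filter (fun pr : W × W => H.Adj pr.1 pr.2 ∧ σ pr.1 ≠ σ pr.2)).card / 2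

/-!
Spins are `±1` and `σ x₀ ≠ σ y₀`, so flipping both `x₀` and `y₀` just exchanges their spins:
`σ = τ ∘ swap x₀ y₀`. Hence the cut of `σ` is the cut of `τ` in the graph obtained from `G'` by
exchanging `x₀` and `y₀`. That graph gains over `G'` only edges from `{x₀, y₀}` to vertices adjacent
to exactly one of them, at most one edge per such vertex; in `G'` all such vertices lie in
`(X ∪ Y) \ {x₀, y₀}`, which has `200 n₀² - 2` elements.
-/

open Finset

section Swap

variable {W : Type} [DecidableEq W] {x y : W}

lemma comp_swap_eq_of_flip {σ τ : W → ℤˣ} (hxy : σ x ≠ σ y) (hτx : τ x = -σ x)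
    (hτy : τ y = -σ y) (hτ : ∀ a, a ≠ x → a ≠ y → τ a = σ a) : τ ∘ Equiv.swap x y = σ := by
  have hx : σ x = -σ y := Int.units_ne_iff_eq_neg.mp hxy
  funext a
  by_cases hax : a = x
  · subst hax; simp [hτy, hx]
  by_cases hay : a = y
  · subst hay; simp [hτx, hx]
  simp [Equiv.swap_apply_of_ne_of_ne hax hay, hτ a hax hay]

lemma mem_and_eq_of_swap_adj_of_not_adj (H : SimpleGraph W) [DecidableRel H.Adj] {S : Finset W}
    (hS : ∀ b ∉ S, b ≠ x → b ≠ y → (H.Adj x b ↔ H.Adj y b)) {a b : W} (ha : a = x ∨ a = y)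
    (hswap : H.Adj (Equiv.swap x y a) (Equiv.swap x y b)) (hab : ¬ H.Adj a b) :
    b ∈ S ∧ a = if H.Adj x b then y else x := by
  have hbx : b ≠ x := by
    rintro rfl
    rcases ha with rfl | rfl <;> simp_all [H.adj_comm]
  have hby : b ≠ y := by
    rintro rfl
    rcases ha with rfl | rfl <;> simp_all [H.adj_comm]
  rw [Equiv.swap_apply_of_ne_of_ne hbx hby] at hswap
  have hbS : b ∈ S := by
    by_contra hbS
    have := hS b hbS hbx hby
    rcases ha with rfl | rfl <;> simp_all
  refine ⟨hbS, ?_⟩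
  rcases ha with rfl | rfl <;> simp_all

end Swap

section FlipPair

variable {W : Type} [Fintype W]

def cutPairs (H : SimpleGraph W) [DecidableRel H.Adj] (ρ : W → ℤˣ) : Finset (W × W) :=
  univ.filter fun p => H.Adj p.1 p.2 ∧ ρ p.1 ≠ ρ p.2

lemma cutCount_eq_card_cutPairs_div_two [DecidableEq W] (H : SimpleGraph W)
    [DecidableRel H.Adj] (ρ : W → ℤˣ) : cutCount H ρ = #(cutPairs H ρ) / 2 :=
  rfl

lemma card_cutPairs_comp_equiv (H : SimpleGraph W) [DecidableRel H.Adj] (ρ : W → ℤˣ)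
    (e : W ≃ W) : #(cutPairs H (ρ ∘ e)) = #(cutPairs (H.comap e.symm) ρ) :=
  card_equiv (e.prodCongr e) fun p => by simp [cutPairs]

lemma card_cutPairs_le_add [DecidableEq W] (H H' : SimpleGraph W) [DecidableRel H.Adj]
    [DecidableRel H'.Adj] (ρ : W → ℤˣ) :
    #(cutPairs H' ρ) ≤
      #(cutPairs H ρ) + #(univ.filter fun p : W × W => H'.Adj p.1 p.2 ∧ ¬ H.Adj p.1 p.2) := by
  refine (card_le_card fun p hp => ?_).trans (card_union_le _ _)
  by_cases h : H.Adj p.1 p.2 <;> simp_all [cutPairs]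

variable [DecidableEq W] (H : SimpleGraph W) [DecidableRel H.Adj] {x y : W} {S : Finset W}

lemma card_swap_adj_not_adj_le
    (hS : ∀ b ∉ S, b ≠ x → b ≠ y → (H.Adj x b ↔ H.Adj y b)) :
    #(univ.filter fun p : W × W =>
        (H.comap (Equiv.swap x y)).Adj p.1 p.2 ∧ ¬ H.Adj p.1 p.2) ≤ 2 * #S := by
  -- a new edge joins some `b ∈ S` to `f b`, the one of `x`, `y` that `b` was not adjacent to
  set f : W → W := fun b => if H.Adj x b then y else x
  calc _ ≤ #(S.image (fun b => (f b, b)) ∪ S.image (fun b => (b, f b))) := by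
        refine card_le_card fun ⟨a, b⟩ hp => ?_
        simp only [mem_filter, mem_univ, true_and, SimpleGraph.comap_adj] at hp
        obtain ⟨hswap, hab⟩ := hp
        by_cases ha : a = x ∨ a = y
        · obtain ⟨hb, rfl⟩ := mem_and_eq_of_swap_adj_of_not_adj H hS ha hswap hab
          exact mem_union_left _ (mem_image_of_mem _ hb)
        by_cases hb : b = x ∨ b = y
        · obtain ⟨ha, rfl⟩ := mem_and_eq_of_swap_adj_of_not_adj H hS hb hswap.symm
            (fun h => hab h.symm)
          exact mem_union_right _ (mem_image_of_mem _ ha)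
        push Not at ha hb
        rw [Equiv.swap_apply_of_ne_of_ne ha.1 ha.2, Equiv.swap_apply_of_ne_of_ne hb.1 hb.2] at hswap
        exact absurd hswap hab
    _ ≤ #S + #S := (card_union_le _ _).trans (add_le_add card_image_le card_image_le)
    _ = 2 * #S := (two_mul _).symm

theorem cutCount_le_add_of_flip_pair (hS : ∀ b ∉ S, b ≠ x → b ≠ y → (H.Adj x b ↔ H.Adj y b))
    {σ τ : W → ℤˣ} (hxy : σ x ≠ σ y) (hτx : τ x = -σ x) (hτy : τ y = -σ y)
    (hτ : ∀ a, a ≠ x → a ≠ y → τ a = σ a) : cutCount H σ ≤ cutCount H τ + #S := by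
  have hpairs : #(cutPairs H σ) ≤ #(cutPairs H τ) + 2 * #S :=
    calc #(cutPairs H σ) = #(cutPairs (H.comap (Equiv.swap x y)) τ) := by
          rw [← comp_swap_eq_of_flip hxy hτx hτy hτ, card_cutPairs_comp_equiv, Equiv.symm_swap]
      _ ≤ _ := card_cutPairs_le_add H _ τ
      _ ≤ _ := Nat.add_le_add_left (card_swap_adj_not_adj_le H hS) _
  rw [cutCount_eq_card_cutPairs_div_two, cutCount_eq_card_cutPairs_div_two]
  omega

end FlipPair

section Frame

variable {V : Type} (n0 : ℕ)

def frameEmb : Fin (100 * n0 * n0) ⊕ Fin (100 * n0 * n0) ↪ GPV V n0 :=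
  ⟨Sum.elim GPV.X GPV.Y,
    Function.Injective.sumElim (fun _ _ h => GPV.X.inj h) (fun _ _ h => GPV.Y.inj h)
      fun _ _ h => by cases h⟩

def frameSet : Finset (GPV V n0) := univ.map (frameEmb n0)

lemma X_mem_frameSet (j : Fin (100 * n0 * n0)) : GPV.X j ∈ frameSet (V := V) n0 :=
  mem_map_of_mem (frameEmb n0) (mem_univ (Sum.inl j))

lemma Y_mem_frameSet (j : Fin (100 * n0 * n0)) : GPV.Y j ∈ frameSet (V := V) n0 :=
  mem_map_of_mem (frameEmb n0) (mem_univ (Sum.inr j))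

variable [DecidableEq V] (hn0 : 0 < n0)

lemma card_frameSet_sdiff_add_two :
    #(frameSet n0 \ {xzero V n0 hn0, yzero V n0 hn0}) + 2 = 200 * n0 ^ 2 := by
  have hsub : {xzero V n0 hn0, yzero V n0 hn0} ⊆ frameSet n0 := by
    simp only [insert_subset_iff, singleton_subset_iff]
    exact ⟨X_mem_frameSet n0 _, Y_mem_frameSet n0 _⟩
  have hpair : #{xzero V n0 hn0, yzero V n0 hn0} = 2 := card_pair (by simp [xzero, yzero])
  have hframe : #(frameSet (V := V) n0) = 200 * n0 ^ 2 := by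
    simp only [frameSet, card_map, card_univ, Fintype.card_sum, Fintype.card_fin]
    ring
  have := card_le_card hsub
  rw [card_sdiff_of_subset hsub]
  omega

variable (G : SimpleGraph V) [DecidableRel G.Adj]

lemma Gp_adj_xzero_and_yzero {b : GPV V n0} (hb : b ∉ frameSet n0) :
    (Gp n0 G).Adj (xzero V n0 hn0) b ∧ (Gp n0 G).Adj (yzero V n0 hn0) b := by
  cases b with
  | X j => exact absurd (X_mem_frameSet n0 j) hb
  | Y j => exact absurd (Y_mem_frameSet n0 j) hb
  | _ => simp [Gp, gpRel, xzero, yzero]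

end Frame

theorem flip_special_pair_cut_drop_general
    (n0 : ℕ) (hn0 : 0 < n0) {V : Type} [Fintype V] [DecidableEq V]
    (G : SimpleGraph V) [DecidableRel G.Adj]
    (σ τ : GPV V n0 → ℤˣ)
    (hxy : σ (xzero V n0 hn0) ≠ σ (yzero V n0 hn0))
    (hτx : τ (xzero V n0 hn0) = -σ (xzero V n0 hn0))
    (hτy : τ (yzero V n0 hn0) = -σ (yzero V n0 hn0))
    (hτ : ∀ a : GPV V n0, a ≠ xzero V n0 hn0 → a ≠ yzero V n0 hn0 → τ a = σ a) :
    (cutCount (Gp n0 G) σ : ℤ) - (cutCount (Gp n0 G) τ : ℤ)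
      ≤ 200 * (n0 : ℤ) ^ 2 - 2 := by
  have hS : ∀ b ∉ frameSet n0 \ {xzero V n0 hn0, yzero V n0 hn0},
      b ≠ xzero V n0 hn0 → b ≠ yzero V n0 hn0 →
        ((Gp n0 G).Adj (xzero V n0 hn0) b ↔ (Gp n0 G).Adj (yzero V n0 hn0) b) := by
    intro b hb hbx hby
    obtain ⟨hx, hy⟩ := Gp_adj_xzero_and_yzero n0 hn0 G (b := b) (by simp_all)
    exact iff_of_true hx hy
  have hcut := cutCount_le_add_of_flip_pair (Gp n0 G) hS hxy hτx hτy hτ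
  have hcard := card_frameSet_sdiff_add_two (V := V) n0 hn0
  zify at hcut hcard
  linarith

theorem flip_special_pair_cut_drop
    (n0 : ℕ) (hn0 : 0 < n0) {V : Type} [Fintype V] [DecidableEq V]
    (hV : Fintype.card V = n0) (G : SimpleGraph V) [DecidableRel G.Adj]
    (σ τ : GPV V n0 → ℤˣ)
    (hxy : σ (xzero V n0 hn0) ≠ σ (yzero V n0 hn0))
    (hτx : τ (xzero V n0 hn0) = -σ (xzero V n0 hn0))
    (hτy : τ (yzero V n0 hn0) = -σ (yzero V n0 hn0))
    (hτ : ∀ a : GPV V n0, a ≠ xzero V n0 hn0 → a ≠ yzero V n0 hn0 → τ a = σ a) :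
    (cutCount (Gp n0 G) σ : ℤ) - (cutCount (Gp n0 G) τ : ℤ)
      ≤ 200 * (n0 : ℤ) ^ 2 - 2 :=
  flip_special_pair_cut_drop_general n0 hn0 G σ τ hxy hτx hτy hτ

end QAOA
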